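/- arXiv:2306.08041 — 2 statements merged into one kernel-verified Lean document; each statement's English description precedes it below -/
import Mathlib

section
/- Let (A, R) be a two-player zero-sum normal-form game with A = A₁ × A₂ for finite nonempty action sets A₁, A₂. If a pure strategy profile π is a strict Nash equilibrium of (A, R), then every mixed strategy profile that is a Nash equilibrium of (A, R) equals π (with π identified with its pair of point-mass distributions). -/
open Finset

/-- A mixed strategy: nonnegative weights summing to one. -/
def IsMixed {α : Type*} [Fintype α] (p : α → ℝ) : Prop :=
  (∀ a, 0 ≤ p a) ∧ ∑ a, p a = 1

/-- The point-mass distribution at `a`. -/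
def pmass {α : Type*} [DecidableEq α] (a : α) : α → ℝ :=
  fun x => if x = a then 1 else 0

/-- Expected reward of a mixed strategy profile `(p, q)` in the game with reward `R`. -/
def expR {A₁ A₂ : Type*} [Fintype A₁] [Fintype A₂]
    (R : A₁ × A₂ → ℝ) (p : A₁ → ℝ) (q : A₂ → ℝ) : ℝ :=
  ∑ a₁, ∑ a₂, p a₁ * q a₂ * R (a₁, a₂)

/-- `(p, q)` is a (mixed) Nash equilibrium of the zero-sum game with reward `R`
(player 1 minimizes `R`, player 2 maximizes `R`). -/
def IsNE {A₁ A₂ : Type*} [Fintype A₁] [Fintype A₂] [DecidableEq A₁] [DecidableEq A₂]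
    (R : A₁ × A₂ → ℝ) (p : A₁ → ℝ) (q : A₂ → ℝ) : Prop :=
  IsMixed p ∧ IsMixed q ∧
  (∀ a₂, expR R p (pmass a₂) ≤ expR R p q) ∧
  (∀ a₁, expR R p q ≤ expR R (pmass a₁) q)

/-- The set of all mixed Nash equilibria of the game with reward `R`. -/
def NESet {A₁ A₂ : Type*} [Fintype A₁] [Fintype A₂] [DecidableEq A₁] [DecidableEq A₂]
    (R : A₁ × A₂ → ℝ) : Set ((A₁ → ℝ) × (A₂ → ℝ)) :=
  {pq | IsNE R pq.1 pq.2}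

/-- The pure strategy profile `π` is a strict Nash equilibrium of the game with reward `R`. -/
def IsStrictNE {A₁ A₂ : Type*} (R : A₁ × A₂ → ℝ) (π : A₁ × A₂) : Prop :=
  (∀ a₂, a₂ ≠ π.2 → R (π.1, a₂) < R π) ∧
  (∀ a₁, a₁ ≠ π.1 → R π < R (a₁, π.2))

lemma expR_pmass_right {A₁ A₂ : Type*} [Fintype A₁] [Fintype A₂] [DecidableEq A₂]
    (R : A₁ × A₂ → ℝ) (p : A₁ → ℝ) (b : A₂) :
    expR R p (pmass b) = ∑ a, p a * R (a, b) := by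
  unfold expR pmass
  simp [mul_ite, ite_mul]

lemma expR_pmass_left {A₁ A₂ : Type*} [Fintype A₁] [Fintype A₂] [DecidableEq A₁]
    (R : A₁ × A₂ → ℝ) (q : A₂ → ℝ) (a : A₁) :
    expR R (pmass a) q = ∑ b, q b * R (a, b) := by
  unfold expR pmass
  simp [ite_mul]

lemma mixed_eq_pmass {α : Type*} [Fintype α] [DecidableEq α]
    (w : α → ℝ) (hw : IsMixed w) (g : α → ℝ) (b : α)
    (hs : ∀ a, a ≠ b → g a < g b) (heq : ∑ a, w a * g a = g b) :
    w = pmass b := by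
  have hzero : ∑ a, w a * (g b - g a) = 0 := by
    have : ∑ a, w a * (g b - g a) = (∑ a, w a) * g b - ∑ a, w a * g a := by
      rw [Finset.sum_mul]
      rw [← Finset.sum_sub_distrib]
      congr 1; ext a; ring
    rw [this, hw.2, heq]; ring
  have hterm : ∀ a ∈ Finset.univ, w a * (g b - g a) = 0 := by
    rw [← Finset.sum_eq_zero_iff_of_nonneg]
    · exact hzero
    · intro a _
      rcases eq_or_ne a b with rfl | hne
      · simp
      · exact mul_nonneg (hw.1 a) (le_of_lt (sub_pos.mpr (hs a hne)))
  have hzero' : ∀ a, a ≠ b → w a = 0 := by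
    intro a hne
    have := hterm a (Finset.mem_univ a)
    rcases mul_eq_zero.mp this with h | h
    · exact h
    · exact absurd (sub_eq_zero.mp h) (ne_of_gt (hs a hne))
  have hb : w b = 1 := by
    have := hw.2
    rwa [Finset.sum_eq_single b (fun a _ h => hzero' a h) (by simp)] at this
  funext x
  unfold pmass
  split
  · next h => rw [h, hb]
  · next h => exact hzero' x h

/-- If a pure strategy profile `π` is a strict Nash equilibrium of a finite two-player
zero-sum game, then every mixed Nash equilibrium equals `π` (identified with its pair
of point-mass distributions). -/
theorem strictNE_unique {A₁ A₂ : Type*} [Fintype A₁] [Fintype A₂]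
    [DecidableEq A₁] [DecidableEq A₂] [Nonempty A₁] [Nonempty A₂]
    (R : A₁ × A₂ → ℝ) (π : A₁ × A₂) (hstrict : IsStrictNE R π) :
    ∀ p q, IsNE R p q → p = pmass π.1 ∧ q = pmass π.2 := by
  intro p q hNE
  obtain ⟨hp, hq, h1, h2⟩ := hNE
  obtain ⟨hs1, hs2⟩ := hstrict
  have hPq : expR R (pmass π.1) q ≤ R π := by
    rw [expR_pmass_left]
    calc ∑ b, q b * R (π.1, b) ≤ ∑ b, q b * R π := by
          apply Finset.sum_le_sum
          intro b _
          apply mul_le_mul_of_nonneg_left _ (hq.1 b)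
          rcases eq_or_ne b π.2 with rfl | hne
          · simp
          · exact le_of_lt (hs1 b hne)
      _ = R π := by rw [← Finset.sum_mul, hq.2, one_mul]
  have hpQ : R π ≤ expR R p (pmass π.2) := by
    rw [expR_pmass_right]
    calc R π = ∑ a, p a * R π := by rw [← Finset.sum_mul, hp.2, one_mul]
      _ ≤ ∑ a, p a * R (a, π.2) := by
          apply Finset.sum_le_sum
          intro a _
          apply mul_le_mul_of_nonneg_left _ (hp.1 a)
          rcases eq_or_ne a π.1 with rfl | hne
          · simp
          · exact le_of_lt (hs2 a hne)
  have hchain : expR R p (pmass π.2) ≤ expR R (pmass π.1) q :=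
    le_trans (h1 π.2) (h2 π.1)
  have heqQ : expR R p (pmass π.2) = R π :=
    le_antisymm (le_trans hchain hPq) hpQ
  have heqP : expR R (pmass π.1) q = R π :=
    le_antisymm hPq (le_trans hpQ hchain)
  constructor
  · apply mixed_eq_pmass p hp (fun a => -R (a, π.2)) π.1
    · intro a hne
      simpa using hs2 a hne
    · rw [expR_pmass_right] at heqQ
      have : ∑ a, p a * -R (a, π.2) = -∑ a, p a * R (a, π.2) := by
        rw [← Finset.sum_neg_distrib]; congr 1; ext a; ring
      rw [this, heqQ]
  · apply mixed_eq_pmass q hq (fun b => R (π.1, b)) π.2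
    · intro b hne
      simpa using hs1 b hne
    · rw [expR_pmass_left] at heqP
      rw [heqP]
end

section
/- Let A = A₁ × A₂ for finite nonempty action sets A₁, A₂, let π† be a pure strategy profile, let b > 0 and ι ∈ (0, b). Define R̂ : A → ℝ by R̂(π†) = 0, R̂((π†₁, a₂)) = −b for all a₂ ≠ π†₂, R̂((a₁, π†₂)) = b for all a₁ ≠ π†₁, and R̂((a₁, a₂)) = 0 for a₁ ≠ π†₁ and a₂ ≠ π†₂. Then every R : A → ℝ with |R(a) − R̂(a)| ≤ (b − ι)/4 for all a ∈ A belongs to the ι-strict unique Nash set U̲(π†; ι); in particular, π† is the unique Nash equilibrium of (A, R) among all mixed strategy profiles. -/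
open Finset

lemma pmass_mixed {α : Type*} [Fintype α] [DecidableEq α] (a : α) : IsMixed (pmass a) := by
  constructor
  · intro x; unfold pmass; split <;> norm_num
  · simp [pmass]

lemma expR_eq_fst {A₁ A₂ : Type*} [Fintype A₁] [Fintype A₂]
    (R : A₁ × A₂ → ℝ) (p : A₁ → ℝ) (q : A₂ → ℝ) :
    expR R p q = ∑ a₁, p a₁ * ∑ a₂, q a₂ * R (a₁, a₂) := by
  simp [expR, Finset.mul_sum, mul_assoc]

lemma expR_eq_snd {A₁ A₂ : Type*} [Fintype A₁] [Fintype A₂]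
    (R : A₁ × A₂ → ℝ) (p : A₁ → ℝ) (q : A₂ → ℝ) :
    expR R p q = ∑ a₂, q a₂ * ∑ a₁, p a₁ * R (a₁, a₂) := by
  rw [expR, Finset.sum_comm]
  simp only [Finset.mul_sum]
  exact Finset.sum_congr rfl fun _ _ => Finset.sum_congr rfl fun _ _ => by ring

lemma expR_pmass_fst {A₁ A₂ : Type*} [Fintype A₁] [Fintype A₂] [DecidableEq A₁]
    (R : A₁ × A₂ → ℝ) (x : A₁) (q : A₂ → ℝ) :
    expR R (pmass x) q = ∑ a₂, q a₂ * R (x, a₂) := by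
  rw [expR_eq_fst]; simp [pmass, ite_mul]

lemma expR_pmass_snd {A₁ A₂ : Type*} [Fintype A₁] [Fintype A₂] [DecidableEq A₂]
    (R : A₁ × A₂ → ℝ) (p : A₁ → ℝ) (y : A₂) :
    expR R p (pmass y) = ∑ a₁, p a₁ * R (a₁, y) := by
  rw [expR_eq_snd]; simp [pmass, ite_mul]

lemma expR_pmass_pmass {A₁ A₂ : Type*} [Fintype A₁] [Fintype A₂] [DecidableEq A₁] [DecidableEq A₂]
    (R : A₁ × A₂ → ℝ) (x : A₁) (y : A₂) :
    expR R (pmass x) (pmass y) = R (x, y) := by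
  rw [expR_pmass_fst]; simp [pmass, ite_mul]

lemma expR_le_of_pure {A₁ A₂ : Type*} [Fintype A₁] [Fintype A₂] [DecidableEq A₂]
    {R : A₁ × A₂ → ℝ} {p : A₁ → ℝ} {q : A₂ → ℝ} {c : ℝ}
    (hq : IsMixed q) (h : ∀ a₂, expR R p (pmass a₂) ≤ c) : expR R p q ≤ c := by
  rw [expR_eq_snd]
  calc ∑ a₂, q a₂ * ∑ a₁, p a₁ * R (a₁, a₂) ≤ ∑ a₂, q a₂ * c := by
        refine Finset.sum_le_sum fun i _ => mul_le_mul_of_nonneg_left ?_ (hq.1 i)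
        rw [← expR_pmass_snd]; exact h i
    _ = c := by rw [← Finset.sum_mul, hq.2, one_mul]

lemma le_expR_of_pure {A₁ A₂ : Type*} [Fintype A₁] [Fintype A₂] [DecidableEq A₁]
    {R : A₁ × A₂ → ℝ} {p : A₁ → ℝ} {q : A₂ → ℝ} {c : ℝ}
    (hp : IsMixed p) (h : ∀ a₁, c ≤ expR R (pmass a₁) q) : c ≤ expR R p q := by
  rw [expR_eq_fst]
  calc c = ∑ a₁, p a₁ * c := by rw [← Finset.sum_mul, hp.2, one_mul]
    _ ≤ ∑ a₁, p a₁ * ∑ a₂, q a₂ * R (a₁, a₂) := by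
        refine Finset.sum_le_sum fun i _ => mul_le_mul_of_nonneg_left ?_ (hp.1 i)
        rw [← expR_pmass_fst]; exact h i

/-- For the constructed reward function `R̂` (value `0` at the target profile `π†`,
`-b` on the rest of the target row of player 1, `b` on the rest of the target column
of player 2, `0` elsewhere), every reward function within sup-distance `(b - ι)/4` of
`R̂` lies in `U̲(π†; ι)`; in particular `π†` is its unique mixed Nash equilibrium. -/
theorem constructed_reward_attack {A₁ A₂ : Type*} [Fintype A₁] [Fintype A₂]
    [DecidableEq A₁] [DecidableEq A₂] [Nonempty A₁] [Nonempty A₂]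
    (πd : A₁ × A₂) (b ι : ℝ) (hb : 0 < b) (hι : 0 < ι) (hιb : ι < b)
    (Rhat : A₁ × A₂ → ℝ)
    (hRhat : Rhat = fun a =>
      if a = πd then 0
      else if a.1 = πd.1 then -b
      else if a.2 = πd.2 then b
      else 0) :
    ∀ R : A₁ × A₂ → ℝ, (∀ a, |R a - Rhat a| ≤ (b - ι) / 4) →
      ((∀ a₂, a₂ ≠ πd.2 → R (πd.1, a₂) + ι ≤ R πd) ∧
       (∀ a₁, a₁ ≠ πd.1 → R πd ≤ R (a₁, πd.2) - ι)) ∧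
      NESet R = {(pmass πd.1, pmass πd.2)} := by
  intro R hR
  have hd : |R πd| ≤ (b - ι) / 4 := by
    have h := hR πd; rw [hRhat] at h; simpa using h
  rw [abs_le] at hd
  -- row strictness
  have hrow : ∀ a₂, a₂ ≠ πd.2 → R (πd.1, a₂) + ι ≤ R πd := by
    intro a₂ ha
    have hne : (πd.1, a₂) ≠ πd := by
      intro h; apply ha; rw [← h]
    have h := hR (πd.1, a₂)
    rw [hRhat] at h
    simp only [hne, ite_false, ite_true, if_false, if_true, if_neg, not_false_iff] at h
    rw [abs_le] at h
    linarith [h.1, h.2, hd.1, hd.2]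
  have hcol : ∀ a₁, a₁ ≠ πd.1 → R πd ≤ R (a₁, πd.2) - ι := by
    intro a₁ ha
    have hne : (a₁, πd.2) ≠ πd := by
      intro h; apply ha; rw [← h]
    have h := hR (a₁, πd.2)
    rw [hRhat] at h
    simp only [hne, ha, ite_false, ite_true, if_false, if_true] at h
    rw [abs_le] at h
    linarith [h.1, h.2, hd.1, hd.2]
  refine ⟨⟨hrow, hcol⟩, ?_⟩
  have hmketa : ((πd.1, πd.2) : A₁ × A₂) = πd := rfl
  -- the target point is a Nash equilibrium
  have hstar : IsNE R (pmass πd.1) (pmass πd.2) := by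
    refine ⟨pmass_mixed _, pmass_mixed _, ?_, ?_⟩
    · intro a₂
      rw [expR_pmass_pmass, expR_pmass_pmass, hmketa]
      by_cases h : a₂ = πd.2
      · rw [h, hmketa]
      · linarith [hrow a₂ h]
    · intro a₁
      rw [expR_pmass_pmass, expR_pmass_pmass, hmketa]
      by_cases h : a₁ = πd.1
      · rw [h, hmketa]
      · linarith [hcol a₁ h]
  have hv4 : expR R (pmass πd.1) (pmass πd.2) = R πd := by
    rw [expR_pmass_pmass, hmketa]
  ext pq
  obtain ⟨p, q⟩ := pq
  simp only [NESet, Set.mem_setOf_eq, Set.mem_singleton_iff, Prod.mk.injEq]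
  constructor
  · rintro ⟨hp, hq, hbest2, hbest1⟩
    have h1 : expR R p (pmass πd.2) ≤ expR R p q :=
      expR_le_of_pure (pmass_mixed _) hbest2
    have h2 : expR R p q ≤ expR R (pmass πd.1) q :=
      le_expR_of_pure (pmass_mixed _) hbest1
    have h3 : expR R (pmass πd.1) q ≤ R πd := by
      refine expR_le_of_pure hq fun a₂ => ?_
      have := hstar.2.2.1 a₂; rwa [hv4] at this
    have h4 : R πd ≤ expR R p (pmass πd.2) := by
      refine le_expR_of_pure hp fun a₁ => ?_
      have := hstar.2.2.2 a₁; rwa [hv4] at this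
    have he1 : expR R p (pmass πd.2) = R πd :=
      le_antisymm (h1.trans (h2.trans h3)) h4
    have he3 : expR R (pmass πd.1) q = R πd :=
      le_antisymm h3 (h4.trans (h1.trans h2))
    rw [expR_pmass_snd] at he1
    rw [expR_pmass_fst] at he3
    -- support of p
    have hp0 : ∀ a₁, a₁ ≠ πd.1 → p a₁ = 0 := by
      intro a₁ ha
      by_contra h0
      have hpos : 0 < p a₁ := lt_of_le_of_ne (hp.1 a₁) (Ne.symm h0)
      have hlt : ∑ x, p x * R πd < ∑ x, p x * R (x, πd.2) := by
        refine Finset.sum_lt_sum (fun i _ => ?_) ⟨a₁, Finset.mem_univ _, ?_⟩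
        · refine mul_le_mul_of_nonneg_left ?_ (hp.1 i)
          by_cases h : i = πd.1
          · rw [h, hmketa]
          · linarith [hcol i h]
        · exact mul_lt_mul_of_pos_left (by linarith [hcol a₁ ha]) hpos
      rw [← Finset.sum_mul, hp.2, one_mul, he1] at hlt
      exact lt_irrefl _ hlt
    have hp1 : p πd.1 = 1 := by
      have hs : ∑ x, p x = p πd.1 :=
        Finset.sum_eq_single πd.1 (fun c _ hc => hp0 c hc)
          (fun h => absurd (Finset.mem_univ _) h)
      rw [← hs, hp.2]
    have hq0 : ∀ a₂, a₂ ≠ πd.2 → q a₂ = 0 := by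
      intro a₂ ha
      by_contra h0
      have hpos : 0 < q a₂ := lt_of_le_of_ne (hq.1 a₂) (Ne.symm h0)
      have hlt : ∑ x, q x * R (πd.1, x) < ∑ x, q x * R πd := by
        refine Finset.sum_lt_sum (fun i _ => ?_) ⟨a₂, Finset.mem_univ _, ?_⟩
        · refine mul_le_mul_of_nonneg_left ?_ (hq.1 i)
          by_cases h : i = πd.2
          · rw [h, hmketa]
          · linarith [hrow i h]
        · exact mul_lt_mul_of_pos_left (by linarith [hrow a₂ ha]) hpos
      rw [← Finset.sum_mul, hq.2, one_mul, he3] at hlt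
      exact lt_irrefl _ hlt
    have hq1 : q πd.2 = 1 := by
      have hs : ∑ x, q x = q πd.2 :=
        Finset.sum_eq_single πd.2 (fun c _ hc => hq0 c hc)
          (fun h => absurd (Finset.mem_univ _) h)
      rw [← hs, hq.2]
    constructor
    · funext x
      by_cases hx : x = πd.1
      · rw [hx]; simp [pmass, hp1]
      · simp [pmass, hx, hp0 x hx]
    · funext x
      by_cases hx : x = πd.2
      · rw [hx]; simp [pmass, hq1]
      · simp [pmass, hx, hq0 x hx]
  · rintro ⟨h1, h2⟩
    rw [h1, h2]
    exact hstar
end
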